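/- arXiv:0911.0828 — 4 statements merged into one kernel-verified Lean document; each statement's English description precedes it below -/
import Mathlib

section
/- Let A and B be self-adjoint operators on a Hilbert space with A boundedly invertible and ‖A^{-1/2} B A^{-1/2}‖ ≤ q < 1 (where A > 0). Then A + B is boundedly invertible and ‖(A + B)^{-1}‖ ≤ ‖A^{-1}‖ / (1 - q). -/
/-! With `T = R B R`, the identity `R A R = 1` gives `R (A + B) R = 1 + T`, and `‖T‖ ≤ q < 1`
makes `1 + T` invertible by the Neumann series, with `‖(1 + T)⁻¹‖ ≤ (1 - q)⁻¹`. Since `R` is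
invertible, `(A + B)⁻¹ = R (1 + T)⁻¹ R`, and `‖R‖² = ‖R R‖ = ‖A⁻¹‖` because `R` is self-adjoint. -/

theorem mul_mul_eq_one_of_mul_self_mul_eq_one {M : Type*} [Monoid M] {r a : M}
    (h₁ : a * (r * r) = 1) (h₂ : r * r * a = 1) : r * a * r = 1 := by
  have hcomm : a * r = r * a := by
    calc a * r = a * r * (r * (r * a)) := by rw [← mul_assoc r, h₂, mul_one]
      _ = a * (r * r) * (r * a) := by simp only [mul_assoc]
      _ = r * a := by rw [h₁, one_mul]
  rw [mul_assoc, hcomm, ← mul_assoc, h₂]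

theorem IsUnit.mul_mul_inv_eq_one {M : Type*} [Monoid M] {r x : M} (hr : IsUnit r) {u : Mˣ}
    (hu : r * x * r = u) : x * (r * ↑u⁻¹ * r) = 1 ∧ r * ↑u⁻¹ * r * x = 1 := by
  obtain ⟨w, rfl⟩ := hr
  obtain rfl : x = ↑w⁻¹ * u * ↑w⁻¹ := by rw [← hu]; simp [mul_assoc]
  constructor <;> simp [mul_assoc]

theorem norm_val_inv_oneSub_le {𝔸 : Type*} [NormedRing 𝔸] [HasSummableGeomSeries 𝔸]
    (h1 : ‖(1 : 𝔸)‖ ≤ 1) {t : 𝔸} (ht : ‖t‖ < 1) :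
    ‖(↑(Units.oneSub t ht)⁻¹ : 𝔸)‖ ≤ (1 - ‖t‖)⁻¹ :=
  (tsum_geometric_le_of_norm_lt_one t ht).trans (by linarith)

theorem neumann_series_inverse_bound_general
    {𝓗 : Type*} [NormedAddCommGroup 𝓗] [InnerProductSpace ℂ 𝓗] [CompleteSpace 𝓗]
    (A B R Ainv : 𝓗 →L[ℂ] 𝓗) (q : ℝ)
    (hAinv₁ : A * Ainv = 1) (hAinv₂ : Ainv * A = 1)
    (hR : IsSelfAdjoint R)
    (hRR : R * R = Ainv)
    (hq : ‖R * B * R‖ ≤ q) (hq1 : q < 1) :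
    ∃ C : 𝓗 →L[ℂ] 𝓗, (A + B) * C = 1 ∧ C * (A + B) = 1 ∧
      ‖C‖ ≤ ‖Ainv‖ / (1 - q) := by
  have hT : ‖-(R * B * R)‖ < 1 := by rw [norm_neg]; exact hq.trans_lt hq1
  have hR_unit : IsUnit R :=
    (isUnit_pow_iff two_ne_zero).mp ⟨⟨Ainv, A, hAinv₂, hAinv₁⟩, by rw [sq, hRR]⟩
  have hRAR : R * A * R = 1 :=
    mul_mul_eq_one_of_mul_self_mul_eq_one (hRR ▸ hAinv₁) (hRR ▸ hAinv₂)
  have hconj : R * (A + B) * R = ↑(Units.oneSub _ hT) := by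
    rw [Units.val_oneSub, sub_neg_eq_add, mul_add, add_mul, hRAR]
  obtain ⟨hright, hleft⟩ := hR_unit.mul_mul_inv_eq_one hconj
  refine ⟨_, hright, hleft, ?_⟩
  calc ‖R * ↑(Units.oneSub _ hT)⁻¹ * R‖
      ≤ ‖R‖ * ‖(↑(Units.oneSub _ hT)⁻¹ : 𝓗 →L[ℂ] 𝓗)‖ * ‖R‖ := norm_mul₃_le
    _ = ‖Ainv‖ * ‖(↑(Units.oneSub _ hT)⁻¹ : 𝓗 →L[ℂ] 𝓗)‖ := by
      rw [← hRR, hR.norm_mul_self]; ring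
    _ ≤ ‖Ainv‖ * (1 - q)⁻¹ := by
      gcongr
      refine (norm_val_inv_oneSub_le ContinuousLinearMap.norm_id_le hT).trans ?_
      rw [norm_neg]
      gcongr
    _ = ‖Ainv‖ / (1 - q) := (div_eq_mul_inv _ _).symm

/-- If `A` is a positive self-adjoint boundedly invertible operator, `B` is self-adjoint,
`R = A^{-1/2}` (i.e. `R` is self-adjoint, positive, and `R * R = A⁻¹`), and
`‖R B R‖ ≤ q < 1`, then `A + B` is boundedly invertible (via a Neumann series) and
`‖(A + B)⁻¹‖ ≤ ‖A⁻¹‖ / (1 - q)`. -/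
theorem neumann_series_inverse_bound
    {𝓗 : Type*} [NormedAddCommGroup 𝓗] [InnerProductSpace ℂ 𝓗] [CompleteSpace 𝓗]
    (A B R Ainv : 𝓗 →L[ℂ] 𝓗) (q : ℝ)
    (hA : IsSelfAdjoint A) (hB : IsSelfAdjoint B)
    (hApos : ∀ x : 𝓗, 0 ≤ (inner ℂ x (A x) : ℂ).re)
    (hAinv₁ : A * Ainv = 1) (hAinv₂ : Ainv * A = 1)
    (hR : IsSelfAdjoint R) (hRpos : ∀ x : 𝓗, 0 ≤ (inner ℂ x (R x) : ℂ).re)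
    (hRR : R * R = Ainv)
    (hq : ‖R * B * R‖ ≤ q) (hq1 : q < 1) :
    ∃ C : 𝓗 →L[ℂ] 𝓗, (A + B) * C = 1 ∧ C * (A + B) = 1 ∧
      ‖C‖ ≤ ‖Ainv‖ / (1 - q) :=
  neumann_series_inverse_bound_general A B R Ainv q hAinv₁ hAinv₂ hR hRR hq hq1
end

section
/- Let T and W be operators on a Hilbert space H with W bounded, and let χ, χ̄ be bounded commuting operators with χ² + χ̄² = 1 which commute with T. Assume T and H_{χ̄} := T + χ̄ W χ̄ are bijections from D(T) ∩ Ran(χ̄) to Ran(χ̄) with bounded inverses. If φ ≠ 0 solves (T + W)φ = 0, then ψ := χφ is nonzero and solves F_χ(T+W)ψ = 0, where F_χ(T+W) = T + χWχ − χWχ̄ H_{χ̄}^{-1} χ̄Wχ. -/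
/-- Smooth Feshbach–Schur map, isospectrality (ii): if `φ ≠ 0` solves `(T + W)φ = 0`,
then `ψ := χ φ` is nonzero and solves `F_χ(T + W) ψ = 0`, where
`F_χ(T + W) = T + χWχ − χWχ̄ H_χ̄⁻¹ χ̄Wχ` and `H_χ̄ = T + χ̄Wχ̄` is boundedly
invertible on `Ran χ̄` with inverse `R` (supported on `Ran χ̄`). -/
theorem feshbach_forward
    {𝓗 : Type*} [NormedAddCommGroup 𝓗] [InnerProductSpace ℂ 𝓗] [CompleteSpace 𝓗]
    (χ χb T W R : 𝓗 →L[ℂ] 𝓗)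
    (hχ0 : χ ≠ 0) (hχb0 : χb ≠ 0)
    (hcomm : χ * χb = χb * χ) (hsum : χ * χ + χb * χb = 1)
    (hTχ : χ * T = T * χ) (hTχb : χb * T = T * χb)
    (hRleft : ∀ x : 𝓗, R ((T + χb * W * χb) (χb x)) = χb x)
    (hRright : ∀ x : 𝓗, (T + χb * W * χb) (R (χb x)) = χb x)
    (hRsupp : χb * R * χb = R)
    (φ : 𝓗) (hφ : φ ≠ 0) (hsol : (T + W) φ = 0) :
    χ φ ≠ 0 ∧
      (T + χ * W * χ - χ * W * χb * R * χb * W * χ) (χ φ) = 0 := by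
  -- pointwise versions of the hypotheses
  have hsum' : ∀ x : 𝓗, χ (χ x) + χb (χb x) = x := by
    intro x
    have := congrArg (fun f : 𝓗 →L[ℂ] 𝓗 => f x) hsum
    simpa [ContinuousLinearMap.add_apply, ContinuousLinearMap.mul_apply] using this
  have hTχb' : ∀ x : 𝓗, χb (T x) = T (χb x) := by
    intro x
    have := congrArg (fun f : 𝓗 →L[ℂ] 𝓗 => f x) hTχb
    simpa [ContinuousLinearMap.mul_apply] using this
  have hTχ' : ∀ x : 𝓗, χ (T x) = T (χ x) := by
    intro x
    have := congrArg (fun f : 𝓗 →L[ℂ] 𝓗 => f x) hTχ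
    simpa [ContinuousLinearMap.mul_apply] using this
  have hsol' : T φ + W φ = 0 := by
    simpa [ContinuousLinearMap.add_apply] using hsol
  have hχbχb : χb (χb φ) = φ - χ (χ φ) := by
    have := hsum' φ
    abel_nf
    linear_combination (norm := abel) this
  -- key computation: H_χb (χb φ) = - χb (W (χ (χ φ)))
  have hkey : (T + χb * W * χb) (χb φ) = - χb (W (χ (χ φ))) := by
    simp only [ContinuousLinearMap.add_apply, ContinuousLinearMap.mul_apply]
    rw [hχbχb, ← hTχb' φ, map_sub, map_sub, ← add_sub_assoc, ← map_add, hsol',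
      map_zero, zero_sub]
  -- R applied to χb (W (χ (χ φ))) gives - χb φ
  have hR : R (χb (W (χ (χ φ)))) = - χb φ := by
    have h1 := hRleft φ
    rw [hkey] at h1
    have : R (- χb (W (χ (χ φ)))) = χb φ := h1
    rw [map_neg] at this
    linear_combination (norm := abel) -this
  -- conclusion 1: χ φ ≠ 0
  refine ⟨?_, ?_⟩
  · intro h0
    have hφχb : φ = χb (χb φ) := by rw [hχbχb, h0, map_zero, sub_zero]
    have hH0 : (T + χb * W * χb) (χb φ) = 0 := by
      simp [hkey, h0]
    have := hRleft φ
    rw [hH0, map_zero] at this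
    exact hφ (by rw [hφχb, ← this, map_zero])
  · -- the Feshbach equation
    simp only [ContinuousLinearMap.sub_apply, ContinuousLinearMap.add_apply,
      ContinuousLinearMap.mul_apply]
    rw [hR]
    simp only [map_neg, sub_neg_eq_add]
    rw [add_assoc, ← map_add χ (W (χ (χ φ))), ← map_add W, hsum' φ, ← hTχ' φ,
      ← map_add χ, hsol', map_zero]
end

section
/- In the setting of the smooth Feshbach-Schur map with both H = T + W : D(T) → H and F_χ(H) : D(T) ∩ V → V boundedly invertible (where Ran χ ⊆ V ⊆ H, T maps D(T)∩V into V, and χ̄T^{-1}χ̄ V ⊆ V), the identity H^{-1} = Q_χ(H) F_χ(H)^{-1} Q_χ^#(H) + χ̄ H_{χ̄}^{-1} χ̄ holds, where Q_χ(H) = χ − χ̄H_{χ̄}^{-1}χ̄Wχ and Q_χ^#(H) = χ − χWχ̄H_{χ̄}^{-1}χ̄. -/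
/-!
Since `Hi` is a left inverse of `H = T + W`, it suffices to show that the right-hand side is a
right inverse of `H`, and this is a computation in the ring of bounded operators. Writing
`R̄ = χ̄ H_χ̄⁻¹ χ̄`, the equation for `H_χ̄⁻¹` and `[T, χ̄] = 0` give `H R̄ = χ̄² + χ² W R̄`, hence
`H Q_χ(H) = χ F_χ(H)`, while `Q_χ^#(H) = χ (1 - W R̄)`. So
`H (Q_χ F_χ⁻¹ Q_χ^# + R̄) = χ² (1 - W R̄) + χ̄² + χ² W R̄ = 1`; here `F_χ⁻¹` is only applied to
vectors in `Ran χ ⊆ V`.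
-/

namespace Feshbach
variable {A : Type*} [Ring A] (χ χb T W R G : A)

/- `map`, `Q` and `Qsharp` are `F_χ(H)`, `Q_χ(H)` and `Q_χ^#(H)` for `H = T + W`, with `R`
standing for `H_χ̄⁻¹`. -/
def map : A := T + χ * W * χ - χ * W * χb * R * χb * W * χ
def Q : A := χ - χb * R * χb * W * χ
def Qsharp : A := χ - χ * W * χb * R * χb

variable {χ χb T W R G}

theorem map_eq (hRsupp : χb * R * χb = R) :
    map χ χb T W R = T + χ * W * χ - χ * W * R * W * χ := by
  conv_rhs => rw [← hRsupp]
  rw [map]; noncomm_ring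

theorem Q_eq (hRsupp : χb * R * χb = R) : Q χ χb W R = χ - R * W * χ := by
  rw [Q, hRsupp]

theorem Qsharp_eq (hRsupp : χb * R * χb = R) : Qsharp χ χb W R = χ * (1 - W * R) := by
  conv_rhs => rw [← hRsupp]
  rw [Qsharp]; noncomm_ring

theorem mul_R_eq (hsum : χ * χ + χb * χb = 1) (hTχb : χb * T = T * χb)
    (hR : (T + χb * W * χb) * R * χb = χb) (hRsupp : χb * R * χb = R) :
    (T + W) * R = χb * χb + χ * χ * W * R := by
  have hTRχb : T * R * χb = χb - χb * W * R :=
    calc T * R * χb = (T + χb * W * χb) * R * χb - χb * W * (χb * R * χb) := by noncomm_ring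
    _ = _ := by rw [hR, hRsupp]
  have hTR : T * R = χb * χb - χb * χb * W * R :=
    calc T * R = T * (χb * R * χb) := by rw [hRsupp]
    _ = χb * T * R * χb := by rw [hTχb]; noncomm_ring
    _ = χb * (T * R * χb) := by noncomm_ring
    _ = _ := by rw [hTRχb]; noncomm_ring
  calc (T + W) * R = T * R + 1 * W * R := by noncomm_ring
  _ = _ := by rw [hTR, ← hsum]; noncomm_ring

theorem mul_Q_eq (hsum : χ * χ + χb * χb = 1) (hTχ : χ * T = T * χ) (hTχb : χb * T = T * χb)
    (hR : (T + χb * W * χb) * R * χb = χb) (hRsupp : χb * R * χb = R) :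
    (T + W) * Q χ χb W R = χ * map χ χb T W R :=
  calc (T + W) * Q χ χb W R = T * χ + 1 * W * χ - (T + W) * R * W * χ := by
        rw [Q_eq hRsupp]; noncomm_ring
  _ = _ := by
        rw [mul_R_eq hsum hTχb hR hRsupp, ← hsum, ← hTχ, map_eq hRsupp]; noncomm_ring

theorem mul_Q_mul_Qsharp_add_eq_one (hsum : χ * χ + χb * χb = 1) (hTχ : χ * T = T * χ)
    (hTχb : χb * T = T * χb) (hR : (T + χb * W * χb) * R * χb = χb)
    (hRsupp : χb * R * χb = R) (hG : map χ χb T W R * G * χ = χ) :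
    (T + W) * (Q χ χb W R * G * Qsharp χ χb W R + χb * R * χb) = 1 :=
  calc (T + W) * (Q χ χb W R * G * Qsharp χ χb W R + χb * R * χb)
      = (T + W) * Q χ χb W R * G * Qsharp χ χb W R + (T + W) * R := by
        rw [hRsupp]; noncomm_ring
  _ = χ * (map χ χb T W R * G * χ) * (1 - W * R) + (T + W) * R := by
        rw [mul_Q_eq hsum hTχ hTχb hR hRsupp, Qsharp_eq hRsupp]; noncomm_ring
  _ = χ * χ + χb * χb := by rw [hG, mul_R_eq hsum hTχb hR hRsupp]; noncomm_ring
  _ = 1 := hsum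

end Feshbach

theorem feshbach_inverse_identity_general
    {𝓗 : Type*} [NormedAddCommGroup 𝓗] [InnerProductSpace ℂ 𝓗]
    (χ χb T W R Hi G : 𝓗 →L[ℂ] 𝓗) (V : Submodule ℂ 𝓗)
    (hsum : χ * χ + χb * χb = 1)
    (hTχ : χ * T = T * χ) (hTχb : χb * T = T * χb)
    -- `R = H_χ̄⁻¹` on `Ran χ̄`, where `H_χ̄ = T + χ̄Wχ̄`
    (hRright : ∀ x : 𝓗, (T + χb * W * χb) (R (χb x)) = χb x)
    (hRsupp : χb * R * χb = R)
    -- the auxiliary subspace `V`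
    (hV : LinearMap.range (χ : 𝓗 →ₗ[ℂ] 𝓗) ≤ V)
    -- `Hi = H⁻¹` where `H = T + W`
    (hHi₂ : Hi * (T + W) = 1)
    -- `G = F_χ(H)⁻¹` on `V`
    (hG₁ : ∀ v ∈ V, (T + χ * W * χ - χ * W * χb * R * χb * W * χ) (G v) = v) :
    Hi = (χ - χb * R * χb * W * χ) * G * (χ - χ * W * χb * R * χb)
        + χb * R * χb := by
  have hR : (T + χb * W * χb) * R * χb = χb := ContinuousLinearMap.ext hRright
  have hG : Feshbach.map χ χb T W R * G * χ = χ :=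
    ContinuousLinearMap.ext fun x => hG₁ (χ x) (hV (LinearMap.mem_range_self _ x))
  exact left_inv_eq_right_inv hHi₂
    (Feshbach.mul_Q_mul_Qsharp_add_eq_one hsum hTχ hTχb hR hRsupp hG)

/-- Smooth Feshbach–Schur map, isospectrality (i), first identity: if `H = T + W` is
boundedly invertible with inverse `Hi`, and `F_χ(H)` is boundedly invertible on `V`
with inverse `G` (where `Ran χ ⊆ V`, `T(V ∩ D(T)) ⊆ V` and `χ̄T⁻¹χ̄ V ⊆ V`), then
`H⁻¹ = Q_χ(H) F_χ(H)⁻¹ Q_χ^#(H) + χ̄ H_χ̄⁻¹ χ̄`. -/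
theorem feshbach_inverse_identity
    {𝓗 : Type*} [NormedAddCommGroup 𝓗] [InnerProductSpace ℂ 𝓗] [CompleteSpace 𝓗]
    (χ χb T W R Ti Hi G : 𝓗 →L[ℂ] 𝓗) (V : Submodule ℂ 𝓗)
    (hχ0 : χ ≠ 0) (hχb0 : χb ≠ 0)
    (hcomm : χ * χb = χb * χ) (hsum : χ * χ + χb * χb = 1)
    (hTχ : χ * T = T * χ) (hTχb : χb * T = T * χb)
    -- `R = H_χ̄⁻¹` on `Ran χ̄`, where `H_χ̄ = T + χ̄Wχ̄`
    (hRleft : ∀ x : 𝓗, R ((T + χb * W * χb) (χb x)) = χb x)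
    (hRright : ∀ x : 𝓗, (T + χb * W * χb) (R (χb x)) = χb x)
    (hRsupp : χb * R * χb = R)
    -- `Ti = T⁻¹` on `Ran χ̄`
    (hTileft : ∀ x : 𝓗, Ti (T (χb x)) = χb x)
    (hTiright : ∀ x : 𝓗, T (Ti (χb x)) = χb x)
    -- the auxiliary subspace `V`
    (hV : LinearMap.range (χ : 𝓗 →ₗ[ℂ] 𝓗) ≤ V)
    (hTV : ∀ v ∈ V, T v ∈ V)
    (hTiV : ∀ v ∈ V, (χb * Ti * χb) v ∈ V)
    -- `Hi = H⁻¹` where `H = T + W`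
    (hHi₁ : (T + W) * Hi = 1) (hHi₂ : Hi * (T + W) = 1)
    -- `G = F_χ(H)⁻¹` on `V`
    (hGV : ∀ v ∈ V, G v ∈ V)
    (hG₁ : ∀ v ∈ V, (T + χ * W * χ - χ * W * χb * R * χb * W * χ) (G v) = v)
    (hG₂ : ∀ v ∈ V, G ((T + χ * W * χ - χ * W * χb * R * χb * W * χ) v) = v) :
    Hi = (χ - χb * R * χb * W * χ) * G * (χ - χ * W * χb * R * χb)
        + χb * R * χb :=
  feshbach_inverse_identity_general χ χb T W R Hi G V hsum hTχ hTχb hRright hRsupp hV hHi₂ hG₁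
end

section
/- In the smooth Feshbach-Schur setting, if H : D(T) → H is boundedly invertible and F_χ(H) : D(T) ∩ V → V is boundedly invertible, then F_χ(H)^{-1} = χ H^{-1} χ + χ̄ T^{-1} χ̄ (as operators on V). -/
/-!
The identity is purely ring-theoretic. With `Q = χ - χ̄ R χ̄ W χ` one has `H Q = χ F_χ(H)`, so
`χ H⁻¹ χ F_χ(H) = χ Q`; and `χ̄ T⁻¹ χ̄ F_χ(H) = χ̄² + χ χ̄ R χ̄ W χ` because `T` commutes with `χ, χ̄`
and is injective on `Ran χ̄`. Adding, `χ H⁻¹ χ + χ̄ T⁻¹ χ̄` is a left inverse of `F_χ(H)`, hence agrees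
with any right inverse of `F_χ(H)` on `V`.
-/

namespace FeshbachSchur

variable {A : Type*} [Ring A]

def feshbachMap (χ χb T W R : A) : A := T + χ * W * χ - χ * W * χb * R * χb * W * χ

def feshbachQ (χ χb W R : A) : A := χ - χb * R * χb * W * χ

variable {χ χb T W R Ti Hi : A}

theorem mul_mul_eq_of_add_mul_mul_eq (hR : (T + χb * W * χb) * R * χb = χb) :
    T * R * χb = χb - χb * W * χb * R * χb := by
  rw [add_mul, add_mul] at hR
  exact eq_sub_of_add_eq hR

theorem mul_feshbachQ (hsum : χ * χ + χb * χb = 1) (hTχ : χ * T = T * χ)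
    (hTχb : χb * T = T * χb) (hR : (T + χb * W * χb) * R * χb = χb) :
    (T + W) * feshbachQ χ χb W R = χ * feshbachMap χ χb T W R := by
  have hχ2 : χ * χ = 1 - χb * χb := eq_sub_of_add_eq hsum
  calc (T + W) * feshbachQ χ χb W R
      = T * χ + W * χ - (T * χb) * R * χb * W * χ - W * χb * R * χb * W * χ := by
        unfold feshbachQ; noncomm_ring
  _ = T * χ + W * χ - χb * (T * R * χb) * W * χ - W * χb * R * χb * W * χ := by
        rw [← hTχb]; noncomm_ring
  _ = T * χ + (1 - χb * χb) * W * χ - (1 - χb * χb) * W * χb * R * χb * W * χ := by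
        rw [mul_mul_eq_of_add_mul_mul_eq hR]; noncomm_ring
  _ = χ * feshbachMap χ χb T W R := by
        rw [← hχ2, ← hTχ]; unfold feshbachMap; noncomm_ring

theorem compl_mul_feshbachMap (hcomm : χ * χb = χb * χ) (hTχ : χ * T = T * χ)
    (hTχb : χb * T = T * χb) (hR : (T + χb * W * χb) * R * χb = χb)
    (hTileft : Ti * T * χb = χb) (hTiright : T * Ti * χb = χb) :
    χb * Ti * χb * feshbachMap χ χb T W R = χb * χb + χ * χb * R * χb * W * χ := by
  set Y := W * χ - W * χb * R * χb * W * χ with hYdef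
  have hT : χb * Ti * χb * T = χb * χb :=
    calc χb * Ti * χb * T = χb * (Ti * (χb * T)) := by noncomm_ring
    _ = χb * (Ti * T * χb) := by rw [hTχb]; noncomm_ring
    _ = χb * χb := by rw [hTileft]
  have hY : χb * Ti * χb * χ * Y = Ti * χb * χb * χ * Y :=
    calc χb * Ti * χb * χ * Y = Ti * T * χb * Ti * χb * χ * Y := by rw [hTileft]
    _ = Ti * (χb * T) * Ti * χb * χ * Y := by rw [hTχb]; noncomm_ring
    _ = Ti * χb * (T * Ti * χb) * χ * Y := by noncomm_ring
    _ = Ti * χb * χb * χ * Y := by rw [hTiright]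
  have hR' : χ * χb * R * χb * W * χ = Ti * χb * χb * χ * Y :=
    calc χ * χb * R * χb * W * χ = Ti * T * χb * χ * R * χb * W * χ := by rw [hTileft, hcomm]
    _ = Ti * (T * χb) * χ * R * χb * W * χ := by noncomm_ring
    _ = Ti * χb * (T * χ) * R * χb * W * χ := by rw [← hTχb]; noncomm_ring
    _ = Ti * χb * χ * (T * R * χb) * W * χ := by rw [← hTχ]; noncomm_ring
    _ = Ti * χb * (χ * χb) * Y := by rw [mul_mul_eq_of_add_mul_mul_eq hR, hYdef]; noncomm_ring
    _ = Ti * χb * χb * χ * Y := by rw [hcomm]; noncomm_ring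
  calc χb * Ti * χb * feshbachMap χ χb T W R = χb * Ti * χb * T + χb * Ti * χb * χ * Y := by
        unfold feshbachMap; rw [hYdef]; noncomm_ring
  _ = χb * χb + χ * χb * R * χb * W * χ := by rw [hT, hY, hR']

theorem leftInverse_mul_feshbachMap (hsum : χ * χ + χb * χb = 1) (hcomm : χ * χb = χb * χ)
    (hTχ : χ * T = T * χ) (hTχb : χb * T = T * χb) (hR : (T + χb * W * χb) * R * χb = χb)
    (hTileft : Ti * T * χb = χb) (hTiright : T * Ti * χb = χb) (hHi : Hi * (T + W) = 1) :
    (χ * Hi * χ + χb * Ti * χb) * feshbachMap χ χb T W R = 1 :=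
  calc (χ * Hi * χ + χb * Ti * χb) * feshbachMap χ χb T W R
      = χ * (Hi * (χ * feshbachMap χ χb T W R)) + χb * Ti * χb * feshbachMap χ χb T W R := by
        noncomm_ring
  _ = χ * feshbachQ χ χb W R + (χb * χb + χ * χb * R * χb * W * χ) := by
        rw [← mul_feshbachQ hsum hTχ hTχb hR, ← mul_assoc Hi, hHi, one_mul,
          compl_mul_feshbachMap hcomm hTχ hTχb hR hTileft hTiright]
  _ = χ * χ + χb * χb := by unfold feshbachQ; noncomm_ring
  _ = 1 := hsum

end FeshbachSchur

theorem feshbach_inverse_identity_two_general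
    {𝓗 : Type*} [NormedAddCommGroup 𝓗] [InnerProductSpace ℂ 𝓗]
    (χ χb T W R Ti Hi G : 𝓗 →L[ℂ] 𝓗) (V : Submodule ℂ 𝓗)
    (hcomm : χ * χb = χb * χ) (hsum : χ * χ + χb * χb = 1)
    (hTχ : χ * T = T * χ) (hTχb : χb * T = T * χb)
    -- `R = H_χ̄⁻¹` on `Ran χ̄`, where `H_χ̄ = T + χ̄Wχ̄`
    (hRright : ∀ x : 𝓗, (T + χb * W * χb) (R (χb x)) = χb x)
    -- `Ti = T⁻¹` on `Ran χ̄`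
    (hTileft : ∀ x : 𝓗, Ti (T (χb x)) = χb x)
    (hTiright : ∀ x : 𝓗, T (Ti (χb x)) = χb x)
    -- `Hi = H⁻¹` where `H = T + W`
    (hHi₂ : Hi * (T + W) = 1)
    -- `G = F_χ(H)⁻¹` on `V`
    (hG₁ : ∀ v ∈ V, (T + χ * W * χ - χ * W * χb * R * χb * W * χ) (G v) = v) :
    ∀ v ∈ V, G v = (χ * Hi * χ) v + (χb * Ti * χb) v := by
  have hleft := FeshbachSchur.leftInverse_mul_feshbachMap hsum hcomm hTχ hTχb
    (ContinuousLinearMap.ext hRright) (ContinuousLinearMap.ext hTileft)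
    (ContinuousLinearMap.ext hTiright) hHi₂
  intro v hv
  calc G v = ((χ * Hi * χ + χb * Ti * χb) * FeshbachSchur.feshbachMap χ χb T W R) (G v) := by
        rw [hleft]; rfl
  _ = (χ * Hi * χ + χb * Ti * χb) v := congrArg (χ * Hi * χ + χb * Ti * χb) (hG₁ v hv)
  _ = (χ * Hi * χ) v + (χb * Ti * χb) v := rfl

/-- Smooth Feshbach–Schur map, isospectrality (i), second identity: if `H = T + W` is
boundedly invertible with inverse `Hi`, and `F_χ(H)` is boundedly invertible on `V`
with inverse `G` (where `Ran χ ⊆ V`, `T(V ∩ D(T)) ⊆ V` and `χ̄T⁻¹χ̄ V ⊆ V`), then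
`F_χ(H)⁻¹ = χ H⁻¹ χ + χ̄ T⁻¹ χ̄` as operators on `V`. -/
theorem feshbach_inverse_identity_two
    {𝓗 : Type*} [NormedAddCommGroup 𝓗] [InnerProductSpace ℂ 𝓗] [CompleteSpace 𝓗]
    (χ χb T W R Ti Hi G : 𝓗 →L[ℂ] 𝓗) (V : Submodule ℂ 𝓗)
    (hχ0 : χ ≠ 0) (hχb0 : χb ≠ 0)
    (hcomm : χ * χb = χb * χ) (hsum : χ * χ + χb * χb = 1)
    (hTχ : χ * T = T * χ) (hTχb : χb * T = T * χb)
    -- `R = H_χ̄⁻¹` on `Ran χ̄`, where `H_χ̄ = T + χ̄Wχ̄`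
    (hRleft : ∀ x : 𝓗, R ((T + χb * W * χb) (χb x)) = χb x)
    (hRright : ∀ x : 𝓗, (T + χb * W * χb) (R (χb x)) = χb x)
    (hRsupp : χb * R * χb = R)
    -- `Ti = T⁻¹` on `Ran χ̄`
    (hTileft : ∀ x : 𝓗, Ti (T (χb x)) = χb x)
    (hTiright : ∀ x : 𝓗, T (Ti (χb x)) = χb x)
    -- the auxiliary subspace `V`
    (hV : LinearMap.range (χ : 𝓗 →ₗ[ℂ] 𝓗) ≤ V)
    (hTV : ∀ v ∈ V, T v ∈ V)
    (hTiV : ∀ v ∈ V, (χb * Ti * χb) v ∈ V)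
    -- `Hi = H⁻¹` where `H = T + W`
    (hHi₁ : (T + W) * Hi = 1) (hHi₂ : Hi * (T + W) = 1)
    -- `G = F_χ(H)⁻¹` on `V`
    (hGV : ∀ v ∈ V, G v ∈ V)
    (hG₁ : ∀ v ∈ V, (T + χ * W * χ - χ * W * χb * R * χb * W * χ) (G v) = v)
    (hG₂ : ∀ v ∈ V, G ((T + χ * W * χ - χ * W * χb * R * χb * W * χ) v) = v) :
    ∀ v ∈ V, G v = (χ * Hi * χ) v + (χb * Ti * χb) v :=
  feshbach_inverse_identity_two_general χ χb T W R Ti Hi G V hcomm hsum hTχ hTχb hRright hTileft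
    hTiright hHi₂ hG₁
end
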